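/- Let n be odd with n ≥ 9. Let G be a simple graph on n vertices whose vertex set is partitioned into A ∪ B with |A| = (n+1)/2 and |B| = (n−1)/2, where B is an independent set, and the edges between A and B are exactly all pairs except the single pair (v₁, u₁) for some fixed v₁ ∈ A and u₁ ∈ B. Suppose the induced subgraph G[A] satisfies: deg_{G[A]}(v₁) ≥ 2, and deg_{G[A]}(a) + deg_{G[A]}(b) ≥ 1 for every pair of distinct nonadjacent vertices a, b of G[A]. Then deg_G(u) + deg_G(v) ≥ n for every pair of distinct nonadjacent vertices u, v of G. -/

import Mathlib

open SimpleGraph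

set_option linter.unusedVariables false

/-- The degree of a vertex: the number of its neighbors. -/
noncomputable def deg {α : Type*} (G : SimpleGraph α) (v : α) : ℕ :=
  (G.neighborSet v).ncard

/-- The join of two (disjoint) graphs: both graphs together with all cross edges. -/
def gJoin {α β : Type*} (G : SimpleGraph α) (H : SimpleGraph β) : SimpleGraph (α ⊕ β) where
  Adj u v := match u, v with
    | Sum.inl a, Sum.inl b => G.Adj a b
    | Sum.inr a, Sum.inr b => H.Adj a b
    | _, _ => True
  symm := ⟨by
    rintro (a | a) (b | b) h
    · exact G.adj_symm h
    · trivial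
    · trivial
    · exact H.adj_symm h⟩
  loopless := ⟨by
    rintro (a | a) h
    · exact G.irrefl h
    · exact H.irrefl h⟩

/-- `kK2 k` : the disjoint union of `k` copies of `K₂`. -/
def kK2 (k : ℕ) : SimpleGraph (Fin k × Fin 2) where
  Adj p q := p.1 = q.1 ∧ p.2 ≠ q.2
  symm := ⟨fun p q h => ⟨h.1.symm, h.2.symm⟩⟩
  loopless := ⟨fun p h => h.2 rfl⟩

/-- `G − F`: the subgraph of `G` induced on the complement of the vertex set `F`. -/
def delVerts {W : Type*} [Fintype W] [DecidableEq W] (G : SimpleGraph W) (F : Finset W) :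
    SimpleGraph ((Fᶜ : Finset W) : Set W) :=
  G.induce ((Fᶜ : Finset W) : Set W)

/-! Write `n = 2k + 1`. Every cross pair except `v₁u₁` is an edge, so a vertex of `B` has degree
`k + 1` (only `u₁` has `k`), and `a ∈ A` has degree `deg_{G[A]} a + k` (one less for `v₁`).
A nonadjacent pair lies inside `A`, inside `B`, or is `{v₁, u₁}`, and in each case these counts,
together with `deg_{G[A]} v₁ ≥ 2` and the condition on `G[A]`, give a degree sum of at least `n`. -/

section CrossEdges

variable {V : Type*} {G : SimpleGraph V} {S T : Set V} {s t : V}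

theorem neighborSet_inter_eq_of_ne
    (hcross : ∀ x ∈ S, ∀ y ∈ T, G.Adj x y ↔ ¬(x = s ∧ y = t))
    {x : V} (hx : x ∈ S) (hxs : x ≠ s) :
    G.neighborSet x ∩ T = T :=
  Set.inter_eq_right.2 fun y hy => (hcross x hx y hy).2 fun h => hxs h.1

theorem neighborSet_inter_eq_sdiff
    (hcross : ∀ x ∈ S, ∀ y ∈ T, G.Adj x y ↔ ¬(x = s ∧ y = t)) (hs : s ∈ S) :
    G.neighborSet s ∩ T = T \ {t} := by
  ext y
  simp only [Set.mem_inter_iff, mem_neighborSet, Set.mem_sdiff, Set.mem_singleton_iff]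
  constructor
  · rintro ⟨hadj, hy⟩
    exact ⟨hy, fun hyt => (hcross s hs y hy).1 hadj ⟨rfl, hyt⟩⟩
  · rintro ⟨hy, hyt⟩
    exact ⟨(hcross s hs y hy).2 fun h => hyt h.2, hy⟩

theorem eq_and_eq_of_not_adj
    (hcross : ∀ x ∈ S, ∀ y ∈ T, G.Adj x y ↔ ¬(x = s ∧ y = t))
    {x y : V} (hx : x ∈ S) (hy : y ∈ T) (hxy : ¬G.Adj x y) : x = s ∧ y = t :=
  not_not.1 (mt (hcross x hx y hy).2 hxy)

end CrossEdges

section Partition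

variable {V : Type*} [Finite V] {G : SimpleGraph V} {S T : Set V} {s t : V}

theorem deg_eq_ncard_inter_add_ncard_inter (hST : Disjoint S T) (hU : S ∪ T = Set.univ)
    (x : V) :
    deg G x = (G.neighborSet x ∩ S).ncard + (G.neighborSet x ∩ T).ncard := by
  rw [deg, ← Set.ncard_union_eq (hST.mono Set.inter_subset_right Set.inter_subset_right),
    ← Set.inter_union_distrib_left, hU, Set.inter_univ]

theorem deg_eq_of_ne (hST : Disjoint S T) (hU : S ∪ T = Set.univ)
    (hcross : ∀ x ∈ S, ∀ y ∈ T, G.Adj x y ↔ ¬(x = s ∧ y = t))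
    {x : V} (hx : x ∈ S) (hxs : x ≠ s) :
    deg G x = (G.neighborSet x ∩ S).ncard + T.ncard := by
  rw [deg_eq_ncard_inter_add_ncard_inter hST hU, neighborSet_inter_eq_of_ne hcross hx hxs]

theorem deg_add_one_eq (hST : Disjoint S T) (hU : S ∪ T = Set.univ)
    (hcross : ∀ x ∈ S, ∀ y ∈ T, G.Adj x y ↔ ¬(x = s ∧ y = t)) (hs : s ∈ S) (ht : t ∈ T) :
    deg G s + 1 = (G.neighborSet s ∩ S).ncard + T.ncard := by
  rw [deg_eq_ncard_inter_add_ncard_inter hST hU, neighborSet_inter_eq_sdiff hcross hs,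
    ← Set.ncard_sdiff_singleton_add_one ht, add_assoc]

theorem two_mul_ncard_add_one_le_deg_add_deg (hST : Disjoint S T) (hU : S ∪ T = Set.univ)
    (hcross : ∀ x ∈ S, ∀ y ∈ T, G.Adj x y ↔ ¬(x = s ∧ y = t)) (hs : s ∈ S) (ht : t ∈ T)
    (hdeg : 2 ≤ (G.neighborSet s ∩ S).ncard)
    (hsigma : ∀ a ∈ S, ∀ b ∈ S, a ≠ b → ¬G.Adj a b →
      1 ≤ (G.neighborSet a ∩ S).ncard + (G.neighborSet b ∩ S).ncard)
    {u v : V} (hu : u ∈ S) (hv : v ∈ S) (huv : u ≠ v) (hadj : ¬G.Adj u v) :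
    2 * T.ncard + 1 ≤ deg G u + deg G v := by
  have hs' := deg_add_one_eq hST hU hcross hs ht
  rcases eq_or_ne u s with rfl | hus
  · have := deg_eq_of_ne hST hU hcross hv (Ne.symm huv)
    omega
  rcases eq_or_ne v s with rfl | hvs
  · have := deg_eq_of_ne hST hU hcross hu huv
    omega
  have := deg_eq_of_ne hST hU hcross hu hus
  have := deg_eq_of_ne hST hU hcross hv hvs
  have := hsigma u hu v hv huv hadj
  omega

theorem two_mul_ncard_le_deg_add_deg_add_one (hST : Disjoint S T) (hU : S ∪ T = Set.univ)
    (hcross : ∀ x ∈ S, ∀ y ∈ T, G.Adj x y ↔ ¬(x = s ∧ y = t)) (hs : s ∈ S) (ht : t ∈ T)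
    (hind : ∀ a ∈ S, ∀ b ∈ S, ¬G.Adj a b) {u v : V} (hu : u ∈ S) (hv : v ∈ S) (huv : u ≠ v) :
    2 * T.ncard ≤ deg G u + deg G v + 1 := by
  have hempty : ∀ x ∈ S, (G.neighborSet x ∩ S).ncard = 0 := fun x hx => by
    rw [Set.eq_empty_of_forall_notMem (s := G.neighborSet x ∩ S) fun y hy => hind x hx y hy.2 hy.1,
      Set.ncard_empty]
  have hs' := deg_add_one_eq hST hU hcross hs ht
  have hdeg : ∀ x ∈ S, x ≠ s → deg G x = T.ncard := fun x hx hxs => by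
    rw [deg_eq_of_ne hST hU hcross hx hxs, hempty x hx, zero_add]
  rw [hempty s hs] at hs'
  rcases eq_or_ne u s with rfl | hus
  · have := hdeg v hv (Ne.symm huv)
    omega
  have := hdeg u hu hus
  rcases eq_or_ne v s with rfl | hvs
  · omega
  have := hdeg v hv hvs
  omega

end Partition

theorem statement_6_general {V : Type*} [Fintype V] (G : SimpleGraph V)
    (n : ℕ) (hodd : Odd n)
    (A B : Set V) (hAB : Disjoint A B) (hU : A ∪ B = Set.univ)
    (hA : A.ncard = (n + 1) / 2) (hB : B.ncard = (n - 1) / 2)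
    (hBind : ∀ u ∈ B, ∀ v ∈ B, ¬G.Adj u v)
    (v₁ u₁ : V) (hv₁ : v₁ ∈ A) (hu₁ : u₁ ∈ B)
    (hcross : ∀ a ∈ A, ∀ b ∈ B, (G.Adj a b ↔ ¬(a = v₁ ∧ b = u₁)))
    (hdegv₁ : 2 ≤ (G.neighborSet v₁ ∩ A).ncard)
    (hsigmaA : ∀ a ∈ A, ∀ b ∈ A, a ≠ b → ¬G.Adj a b →
      1 ≤ (G.neighborSet a ∩ A).ncard + (G.neighborSet b ∩ A).ncard) :
    ∀ u v : V, u ≠ v → ¬G.Adj u v → n ≤ deg G u + deg G v := by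
  obtain ⟨k, rfl⟩ := hodd
  have hcross' : ∀ b ∈ B, ∀ a ∈ A, G.Adj b a ↔ ¬(b = u₁ ∧ a = v₁) := fun b hb a ha => by
    rw [G.adj_comm, hcross a ha b hb, and_comm]
  have hUBA : B ∪ A = Set.univ := Set.union_comm A B ▸ hU
  have degv₁ := deg_add_one_eq hAB hU hcross hv₁ hu₁
  have degu₁ := deg_add_one_eq hAB.symm hUBA hcross' hu₁ hv₁
  intro u v huv hadj
  rcases (hU ▸ Set.mem_univ u : u ∈ A ∪ B) with hu | hu <;>
    rcases (hU ▸ Set.mem_univ v : v ∈ A ∪ B) with hv | hv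
  · have := two_mul_ncard_add_one_le_deg_add_deg hAB hU hcross hv₁ hu₁ hdegv₁ hsigmaA
      hu hv huv hadj
    omega
  · obtain ⟨rfl, rfl⟩ := eq_and_eq_of_not_adj hcross hu hv hadj
    omega
  · obtain ⟨rfl, rfl⟩ := eq_and_eq_of_not_adj hcross hv hu (hadj ∘ Adj.symm)
    omega
  · have := two_mul_ncard_le_deg_add_deg_add_one hAB.symm hUBA hcross' hu₁ hv₁ hBind hu hv huv
    omega

/-- The graph `η₁ = (H_{(n+1)/2} ∨ K̄_{(n−1)/2}) − (v₁, u₁)`, described via a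
partition of the vertex set, satisfies the Ore condition `σ₂(G) ≥ n`. -/
theorem statement_6 {V : Type*} [Fintype V] [DecidableEq V] (G : SimpleGraph V)
    (n : ℕ) (hn : n = Fintype.card V) (hodd : Odd n) (hn9 : 9 ≤ n)
    (A B : Set V) (hAB : Disjoint A B) (hU : A ∪ B = Set.univ)
    (hA : A.ncard = (n + 1) / 2) (hB : B.ncard = (n - 1) / 2)
    (hBind : ∀ u ∈ B, ∀ v ∈ B, ¬G.Adj u v)
    (v₁ u₁ : V) (hv₁ : v₁ ∈ A) (hu₁ : u₁ ∈ B)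
    (hcross : ∀ a ∈ A, ∀ b ∈ B, (G.Adj a b ↔ ¬(a = v₁ ∧ b = u₁)))
    (hdegv₁ : 2 ≤ (G.neighborSet v₁ ∩ A).ncard)
    (hsigmaA : ∀ a ∈ A, ∀ b ∈ A, a ≠ b → ¬G.Adj a b →
      1 ≤ (G.neighborSet a ∩ A).ncard + (G.neighborSet b ∩ A).ncard) :
    ∀ u v : V, u ≠ v → ¬G.Adj u v → n ≤ deg G u + deg G v :=
  statement_6_general G n hodd A B hAB hU hA hB hBind v₁ u₁ hv₁ hu₁ hcross hdegv₁ hsigmaA
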